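/- arXiv:2005.13349 — 2 statements merged into one kernel-verified Lean document; each statement's English description precedes it below -/
import Mathlib

section
/- Let p ≥ 1 be an integer, q ≠ 0 not a root of unity, and x arbitrary. Then the multiple sum F(x) = Σ over integer chains 0 ≤ k_p ≤ … ≤ k_1 of x^{2(k_1+…+k_p)-k_1} q^{(k_1+…+k_p) - Σ_{i=2}^{p} k_{i-1}k_i} · ((q^{-1};q)_{k_1} (x;q^{-1})_{k_1} / (q;q)_{k_1}) · [k_1 choose k_2]_q ⋯ [k_{p-1} choose k_p]_q equals 1 - (1-x)(x + x^3 + … + x^{2p-1}), independently of q. -/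
/-- Pad a chain `k : Fin p → ℕ` to a function on `ℕ` (zero outside `[0, p)`).
Under this indexing `k_1 = pad k 0, …, k_p = pad k (p-1)`. -/
def pad {p : ℕ} (k : Fin p → ℕ) (j : ℕ) : ℕ := if h : j < p then k ⟨j, h⟩ else 0

/-- The 0/1 staircase chain with `m` ones. -/
def chain (p m : ℕ) : Fin p → ℕ := fun i => if (i : ℕ) < m then 1 else 0

lemma chain_antitone (p m : ℕ) : Antitone (chain p m) := by
  intro i j hij
  have h : (i : ℕ) ≤ (j : ℕ) := hij
  unfold chain
  split_ifs <;> omega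

lemma pad_chain (p m : ℕ) (hm : m ≤ p) (j : ℕ) :
    pad (chain p m) j = if j < m then 1 else 0 := by
  unfold pad chain
  by_cases h : j < p
  · simp [h]
  · have : ¬ j < m := by omega
    simp [h, this]

lemma sum_if_lt_nat (m p : ℕ) :
    ∑ j ∈ Finset.range p, (if j < m then 1 else 0) = min m p := by
  induction p with
  | zero => simp
  | succ n ih => rw [Finset.sum_range_succ, ih]; split_ifs <;> omega

lemma sum_if_lt_int (m p : ℕ) :
    ∑ j ∈ Finset.range p, (if j < m then (1 : ℤ) else 0) = ((min m p : ℕ) : ℤ) := by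
  induction p with
  | zero => simp
  | succ n ih =>
      rw [Finset.sum_range_succ, ih]
      split_ifs with h
      · have h2 : min m (n + 1) = min m n + 1 := by omega
        rw [h2]; push_cast; ring
      · have h2 : min m (n + 1) = min m n := by omega
        rw [h2]; ring

lemma antitone_binary (g : ℕ → ℕ) (hg : Antitone g) (h1 : ∀ j, g j ≤ 1) (p : ℕ)
    (i : ℕ) (hi : i < p) :
    g i = if i < ∑ j ∈ Finset.range p, g j then 1 else 0 := by
  rcases Nat.lt_or_ge (g i) 1 with h | h
  · have hgi : g i = 0 := by omega
    have hle : ∑ j ∈ Finset.range p, g j ≤ i := by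
      have hb : ∑ j ∈ Finset.range p, g j ≤
          ∑ j ∈ Finset.range p, (if j < i then 1 else 0) := by
        apply Finset.sum_le_sum
        intro j _
        by_cases hji : j < i
        · simpa [hji] using h1 j
        · have hgj : g j ≤ g i := hg (by omega)
          simp only [hji, if_false]; omega
      rw [sum_if_lt_nat] at hb; omega
    have : ¬ i < ∑ j ∈ Finset.range p, g j := by omega
    simp [hgi, this]
  · have hgi : g i = 1 := le_antisymm (h1 i) h
    have hlt : i < ∑ j ∈ Finset.range p, g j := by
      have hsub : Finset.range (i + 1) ⊆ Finset.range p := by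
        intro j hj; simp only [Finset.mem_range] at *; omega
      have h2 : ∑ j ∈ Finset.range (i + 1), g j ≤ ∑ j ∈ Finset.range p, g j :=
        Finset.sum_le_sum_of_subset hsub
      have h3 : ∑ j ∈ Finset.range (i + 1), g j = i + 1 := by
        have hone : ∀ j ∈ Finset.range (i + 1), g j = 1 := by
          intro j hj
          have hji : j ≤ i := by simp only [Finset.mem_range] at hj; omega
          have h4 := hg hji
          have h5 := h1 j
          omega
        rw [Finset.sum_congr rfl hone]
        simp
      omega
    simp [hgi, hlt]

lemma chain_inj {p m m' : ℕ} (hm : m ≤ p) (hm' : m' ≤ p)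
    (h : chain p m = chain p m') : m = m' := by
  by_contra hne
  rcases Nat.lt_or_ge m m' with hlt | hge
  · have := congrFun h ⟨m, by omega⟩
    simp [chain, hlt] at this
  · have hlt : m' < m := by omega
    have := congrFun h ⟨m', by omega⟩
    simp [chain, hlt] at this

/-- The summand of the multiple sum. -/
noncomputable def Tsum {F : Type*} [Field F] (p : ℕ) (q x : F)
    (k : {f : Fin p → ℕ // Antitone f}) : F :=
  let S : ℕ := ∑ j ∈ Finset.range p, pad k.1 j
  x ^ (2 * S - pad k.1 0) *
    q ^ ((S : ℤ) -
      ∑ j ∈ Finset.range (p - 1), (pad k.1 j : ℤ) * (pad k.1 (j + 1) : ℤ)) *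
    ((∏ i ∈ Finset.range (pad k.1 0), (1 - q⁻¹ * q ^ i)) *
        (∏ i ∈ Finset.range (pad k.1 0), (1 - x * (q⁻¹) ^ i)) /
      (∏ i ∈ Finset.range (pad k.1 0), (1 - q * q ^ i))) *
    ∏ j ∈ Finset.range (p - 1),
      ((∏ i ∈ Finset.range (pad k.1 j), (1 - q * q ^ i)) /
        ((∏ i ∈ Finset.range (pad k.1 (j + 1)), (1 - q * q ^ i)) *
          (∏ i ∈ Finset.range (pad k.1 j - pad k.1 (j + 1)), (1 - q * q ^ i))))

/-- The `a = 1` specialisation of the a-deformed `F_K` invariant of the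
`(2,2p+1)` torus knot equals (up to a unit) its Alexander polynomial:
the multiple sum over chains `0 ≤ k_p ≤ … ≤ k_1` of
`x^{2Σk - k_1} q^{Σk - Σ k_{i-1}k_i} (q⁻¹;q)_{k_1} (x;q⁻¹)_{k_1}/(q;q)_{k_1}
  · [k_1 choose k_2]_q ⋯ [k_{p-1} choose k_p]_q`
equals `1 - (1-x)(x + x³ + … + x^{2p-1})`. -/
theorem torus_knot_FK_at_a_eq_one {F : Type*} [Field F] (p : ℕ) (hp : 1 ≤ p)
    (q x : F) (hq : q ≠ 0) (hroot : ∀ n : ℕ, 0 < n → q ^ n ≠ 1) :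
    (∑ᶠ k : {f : Fin p → ℕ // Antitone f},
      (let S : ℕ := ∑ j ∈ Finset.range p, pad k.1 j
       x ^ (2 * S - pad k.1 0) *
        q ^ ((S : ℤ) -
          ∑ j ∈ Finset.range (p - 1), (pad k.1 j : ℤ) * (pad k.1 (j + 1) : ℤ)) *
        ((∏ i ∈ Finset.range (pad k.1 0), (1 - q⁻¹ * q ^ i)) *
            (∏ i ∈ Finset.range (pad k.1 0), (1 - x * (q⁻¹) ^ i)) /
          (∏ i ∈ Finset.range (pad k.1 0), (1 - q * q ^ i))) *
        ∏ j ∈ Finset.range (p - 1),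
          ((∏ i ∈ Finset.range (pad k.1 j), (1 - q * q ^ i)) /
            ((∏ i ∈ Finset.range (pad k.1 (j + 1)), (1 - q * q ^ i)) *
              (∏ i ∈ Finset.range (pad k.1 j - pad k.1 (j + 1)), (1 - q * q ^ i)))))) =
      1 - (1 - x) * ∑ j ∈ Finset.range p, x ^ (2 * j + 1) := by
  classical
  have hq1 : (1 : F) - q ≠ 0 := by
    intro h
    have hq' : q = 1 := by
      have := sub_eq_zero.mp h
      exact this.symm
    exact hroot 1 one_pos (by rw [pow_one, hq'])
  show ∑ᶠ k, Tsum p q x k = _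
  -- the canonical 0/1 chains
  set C : ℕ → {f : Fin p → ℕ // Antitone f} :=
    fun m => ⟨chain p m, chain_antitone p m⟩ with hC
  set s : Finset {f : Fin p → ℕ // Antitone f} :=
    (Finset.range (p + 1)).image C with hs
  -- terms with k_1 ≥ 2 vanish
  have hT0 : ∀ k : {f : Fin p → ℕ // Antitone f}, 2 ≤ pad k.1 0 → Tsum p q x k = 0 := by
    intro k hk
    have hz : (∏ i ∈ Finset.range (pad k.1 0), (1 - q⁻¹ * q ^ i)) = 0 := by
      apply Finset.prod_eq_zero (Finset.mem_range.mpr (show 1 < pad k.1 0 from hk))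
      rw [pow_one, inv_mul_cancel₀ hq, sub_self]
    unfold Tsum
    rw [hz]
    simp
  -- a chain in the support is a staircase chain
  have hstruct : ∀ k : {f : Fin p → ℕ // Antitone f}, pad k.1 0 ≤ 1 →
      ∃ m ≤ p, k = C m := by
    intro k hk
    have hp0 : 0 < p := hp
    have hpad0 : pad k.1 0 = k.1 ⟨0, hp0⟩ := by simp [pad, hp0]
    have hle1 : ∀ j, pad k.1 j ≤ 1 := by
      intro j
      unfold pad
      split_ifs with h
      · have : k.1 ⟨j, h⟩ ≤ k.1 ⟨0, hp0⟩ := k.2 (by exact Fin.mk_le_mk.mpr (Nat.zero_le j))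
        omega
      · omega
    have hanti : Antitone (pad k.1) := by
      intro i j hij
      unfold pad
      split_ifs with h1 h2 h2
      · exact k.2 (Fin.mk_le_mk.mpr hij)
      · omega
      · omega
      · omega
    refine ⟨∑ j ∈ Finset.range p, pad k.1 j, ?_, ?_⟩
    · calc ∑ j ∈ Finset.range p, pad k.1 j ≤ ∑ j ∈ Finset.range p, 1 :=
            Finset.sum_le_sum (fun j _ => hle1 j)
        _ = p := by simp
    · apply Subtype.ext
      funext i
      have h1 : k.1 i = pad k.1 (i : ℕ) := by simp [pad, i.isLt]
      rw [h1, antitone_binary (pad k.1) hanti hle1 p (i : ℕ) i.isLt]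
      rfl
  have hsupp : Function.support (Tsum p q x) ⊆ ↑s := by
    intro k hk
    rcases Nat.lt_or_ge (pad k.1 0) 2 with h | h
    · obtain ⟨m, hm, rfl⟩ := hstruct k (by omega)
      exact Finset.mem_coe.mpr (Finset.mem_image.mpr ⟨m, Finset.mem_range.mpr (by omega), rfl⟩)
    · exact absurd (hT0 k h) hk
  rw [finsum_eq_sum_of_support_subset _ hsupp]
  rw [Finset.sum_image (by
    intro m hm m' hm' h
    exact chain_inj (Nat.lt_succ_iff.mp (Finset.mem_range.mp hm))
      (Nat.lt_succ_iff.mp (Finset.mem_range.mp hm')) (Subtype.mk_eq_mk.mp h))]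
  -- value at the zero chain
  have hzero : Tsum p q x (C 0) = 1 := by
    have hpad : ∀ j, pad (C 0).1 j = 0 := by
      intro j
      have := pad_chain p 0 (Nat.zero_le p) j
      simpa using this
    unfold Tsum
    simp [hpad]
  -- value at the staircase chain with m+1 ones
  have hsucc : ∀ m : ℕ, m + 1 ≤ p → Tsum p q x (C (m + 1)) = -((1 - x) * x ^ (2 * m + 1)) := by
    intro m hm
    have hpad : ∀ j, pad (C (m + 1)).1 j = if j < m + 1 then 1 else 0 :=
      pad_chain p (m + 1) hm
    have hS : ∑ j ∈ Finset.range p, pad (C (m + 1)).1 j = m + 1 := by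
      rw [Finset.sum_congr rfl (fun j _ => hpad j), sum_if_lt_nat]
      omega
    have hE : ∑ j ∈ Finset.range (p - 1),
        (pad (C (m + 1)).1 j : ℤ) * (pad (C (m + 1)).1 (j + 1) : ℤ) = m := by
      rw [Finset.sum_congr rfl (fun j _ => ?_), sum_if_lt_int (m := m)]
      · have h2 : min m (p - 1) = m := by omega
        rw [h2]
      · rw [hpad j, hpad (j + 1)]
        split_ifs <;> simp <;> omega
    have hB : ∏ j ∈ Finset.range (p - 1),
        ((∏ i ∈ Finset.range (pad (C (m + 1)).1 j), (1 - q * q ^ i)) /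
          ((∏ i ∈ Finset.range (pad (C (m + 1)).1 (j + 1)), (1 - q * q ^ i)) *
            (∏ i ∈ Finset.range (pad (C (m + 1)).1 j - pad (C (m + 1)).1 (j + 1)),
              (1 - q * q ^ i)))) = 1 := by
      apply Finset.prod_eq_one
      intro j _
      rw [hpad j, hpad (j + 1)]
      have hqq : (1 : F) - q * q ^ 0 ≠ 0 := by simpa using hq1
      by_cases h1 : j + 1 < m + 1
      · have h2 : j < m + 1 := by omega
        simp only [h1, h2, if_true]
        rw [Finset.prod_range_one, Nat.sub_self, Finset.prod_range_zero, mul_one,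
          div_self hqq]
      · by_cases h2 : j < m + 1
        · simp only [h1, h2, if_true, if_false]
          rw [Finset.prod_range_one, Finset.prod_range_zero, one_mul, div_self hqq]
        · simp only [h1, h2, if_false]
          simp
    have hpad0 : pad (C (m + 1)).1 0 = 1 := by rw [hpad 0]; simp
    unfold Tsum
    rw [hS, hE, hB, hpad0, mul_one]
    have hx : 2 * (m + 1) - 1 = 2 * m + 1 := by omega
    have he : ((m + 1 : ℕ) : ℤ) - (m : ℤ) = 1 := by push_cast; ring
    rw [hx, he, zpow_one]
    rw [Finset.prod_range_one, Finset.prod_range_one, Finset.prod_range_one]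
    simp only [pow_zero, mul_one]
    field_simp
    ring
  rw [Finset.sum_range_succ' (fun m => Tsum p q x (C m))]
  rw [hzero]
  have : ∑ m ∈ Finset.range p, Tsum p q x (C (m + 1)) =
      ∑ m ∈ Finset.range p, -((1 - x) * x ^ (2 * m + 1)) := by
    apply Finset.sum_congr rfl
    intro m hm
    exact hsucc m (Finset.mem_range.mp hm)
  rw [this, Finset.sum_neg_distrib, ← Finset.mul_sum]
  ring
end

section
/- For a field element q with q ≠ 0 and q not a root of unity, and elements x, t with t ≠ 0, the series Σ_{k=0}^{∞} x^k q^k t^{2k} (q^{-1};q)_k (x;q^{-1})_k / (q;q)_k equals 1 - t^2 x + t^2 x^2. -/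
open Finset

theorem finsum_eq_sum_range_of_eq_zero {M : Type*} [AddCommMonoid M] {f : ℕ → M} {n : ℕ}
    (hf : ∀ k, n ≤ k → f k = 0) : ∑ᶠ k, f k = ∑ k ∈ range n, f k :=
  finsum_eq_sum_of_support_subset f fun k hk =>
    mem_range.mpr (not_le.mp fun h => hk (hf k h))

theorem prod_range_one_sub_mul_pow_eq_zero {R : Type*} [CommRing R] {a q : R} {j k : ℕ}
    (hjk : j < k) (hj : a * q ^ j = 1) : ∏ i ∈ range k, (1 - a * q ^ i) = 0 :=
  prod_eq_zero (mem_range.mpr hjk) (by rw [hj, sub_self])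

theorem trefoil_FK_t_deformed_Alexander_general {F : Type*} [Field F] (q x t : F) (hq : q ≠ 0)
    (hroot : ∀ n : ℕ, 0 < n → q ^ n ≠ 1) :
    (∑ᶠ k : ℕ, x ^ k * q ^ k * t ^ (2 * k) *
        (∏ i ∈ Finset.range k, (1 - q⁻¹ * q ^ i)) *
        (∏ i ∈ Finset.range k, (1 - x * (q⁻¹) ^ i)) /
        (∏ i ∈ Finset.range k, (1 - q * q ^ i))) = 1 - t ^ 2 * x + t ^ 2 * x ^ 2 := by
  have hq1 : 1 - q ≠ 0 := sub_ne_zero.mpr (by simpa using (hroot 1 one_pos).symm)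
  -- `(q⁻¹; q)_k` contains the factor `1 - q⁻¹ * q = 0` once `k ≥ 2`.
  rw [finsum_eq_sum_range_of_eq_zero (n := 2) fun k hk => by
    rw [prod_range_one_sub_mul_pow_eq_zero (j := 1) hk (by rw [pow_one, inv_mul_cancel₀ hq])]
    simp]
  simp only [inv_pow, sum_range_succ, range_one, sum_singleton, pow_zero, mul_one, mul_zero,
    range_zero, prod_empty, ne_eq, one_ne_zero, not_false_eq_true, div_self, pow_one,
    prod_singleton, inv_one]
  field_simp
  ring

/-- The `a = -t⁻¹` specialisation of the (a,t)-deformed trefoil invariant: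
`Σ_k x^k q^k t^{2k} (q⁻¹;q)_k (x;q⁻¹)_k / (q;q)_k = 1 - t²x + t²x²`. -/
theorem trefoil_FK_t_deformed_Alexander {F : Type*} [Field F] (q x t : F) (hq : q ≠ 0)
    (hroot : ∀ n : ℕ, 0 < n → q ^ n ≠ 1) (ht : t ≠ 0) :
    (∑ᶠ k : ℕ, x ^ k * q ^ k * t ^ (2 * k) *
        (∏ i ∈ Finset.range k, (1 - q⁻¹ * q ^ i)) *
        (∏ i ∈ Finset.range k, (1 - x * (q⁻¹) ^ i)) /
        (∏ i ∈ Finset.range k, (1 - q * q ^ i))) = 1 - t ^ 2 * x + t ^ 2 * x ^ 2 :=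
  trefoil_FK_t_deformed_Alexander_general q x t hq hroot
end
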